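/- Every coset c ∈ P∨/Q∨ admits a representative δ ∈ P∨ with the following property: the group homomorphism from NS(R) to Hom(Q∨, ℤ) sending a form b to the linear form λ ↦ b(δ, λ) (where b also denotes the ℚ-bilinear extension of b to V, which takes integer values on P∨ × Q∨) is injective. (This is the combinatorial content of the paper's Lemma that every coset d ∈ Λ_{T_{G^ad}}/Λ_{T_G} = π₁(G^ad) admits a lift δ such that the map (ι_G)^{NS,δ} : NS(M_G) → NS(M_{T_G}) is injective.) -/

import Mathlib

/-- `b` is (the `ℚ`-bilinear extension of) a `W`-invariant symmetric even
`ℤ`-bilinear form on the coroot lattice `Q`, i.e. an element of `NS(R)`. -/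
def IsNSForm {V : Type*} [AddCommGroup V] [Module ℚ V]
    (W : Subgroup (V ≃ₗ[ℚ] V)) (Q : AddSubgroup V)
    (b : V →ₗ[ℚ] V →ₗ[ℚ] ℚ) : Prop :=
  (∀ x y : V, b x y = b y x) ∧
  (∀ w ∈ W, ∀ x y : V, b (w x) (w y) = b x y) ∧
  (∀ x ∈ Q, ∀ y ∈ Q, ∃ n : ℤ, b x y = (n : ℚ)) ∧
  (∀ x ∈ Q, ∃ n : ℤ, b x x = 2 * (n : ℚ))

/-!
Reflection invariance of `b` under `s_i` gives `2 b(z, α_i∨) = α_i(z) b(α_i∨, α_i∨)`, so a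
`W`-invariant form is determined by its values `b(α_i∨, α_i∨)`, because the coroots span `V`.
If `α_i(δ) ≠ 0` for every root, these values are in turn read off from the linear form
`b(δ, ·)` on `Q∨`. Such a regular `δ` exists in every coset `δ₀ + Q∨`: adding a large multiple of
one coroot at a time makes one more root nonvanishing without spoiling the previous ones, since each
`t ↦ α(δ) + t α(α_j∨)` that is not identically zero has at most one zero.
-/

theorem exists_nat_forall_add_mul_ne_zero {K ι : Type*} [Field K] [CharZero K] (s : Finset ι)
    (a b : ι → K) (h : ∀ i ∈ s, a i ≠ 0 ∨ b i ≠ 0) :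
    ∃ N : ℕ, ∀ i ∈ s, a i + N * b i ≠ 0 := by
  have hzeros : ∀ i ∈ s, {N : ℕ | a i + N * b i = 0}.Subsingleton := by
    intro i hi N (hN : a i + N * b i = 0) M (hM : a i + M * b i = 0)
    have hb : b i ≠ 0 := fun hb0 => (h i hi).elim (· (by simpa [hb0] using hN)) (· hb0)
    have : ((N : K) - M) * b i = 0 := by linear_combination hN - hM
    exact_mod_cast sub_eq_zero.mp ((mul_eq_zero.mp this).resolve_right hb)
  obtain ⟨N, hN⟩ := ((s.finite_toSet.biUnion fun i hi => (hzeros i hi).finite)).exists_notMem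
  simp only [Set.mem_iUnion, Set.mem_ofPred_eq, not_exists] at hN
  exact ⟨N, hN⟩

theorem exists_mem_closure_forall_apply_add_ne_zero {K V ι : Type*} [Field K] [CharZero K]
    [AddCommGroup V] [Module K V] (f : ι → V →ₗ[K] K) (v : ι → V) (hfv : ∀ i, f i (v i) ≠ 0)
    (x : V) (s : Finset ι) :
    ∃ q ∈ AddSubgroup.closure (Set.range v), ∀ i ∈ s, f i (x + q) ≠ 0 := by
  classical
  induction s using Finset.induction_on with
  | empty => exact ⟨0, zero_mem _, by simp⟩
  | @insert j s _ ih =>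
    obtain ⟨q, hq, hne⟩ := ih
    obtain ⟨N, hN⟩ := exists_nat_forall_add_mul_ne_zero (insert j s)
      (fun i => f i (x + q)) (fun i => f i (v j)) fun i hi => by
        rcases Finset.mem_insert.mp hi with rfl | hi
        · exact .inr (hfv i)
        · exact .inl (hne i hi)
    have hvj : v j ∈ AddSubgroup.closure (Set.range v) :=
      AddSubgroup.subset_closure (Set.mem_range_self j)
    refine ⟨q + N • v j, add_mem hq (nsmul_mem hvj N), fun i hi => ?_⟩
    simpa [← add_assoc, ← Nat.cast_smul_eq_nsmul K] using hN i hi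

theorem exists_int_apply_eq_of_mem_closure {V ι : Type*} [AddCommGroup V] [Module ℚ V]
    (f : V →ₗ[ℚ] ℚ) (v : ι → V) (hf : ∀ j, ∃ n : ℤ, f (v j) = n) {y : V}
    (hy : y ∈ AddSubgroup.closure (Set.range v)) : ∃ n : ℤ, f y = n := by
  have hle : AddSubgroup.closure (Set.range v) ≤
      (Int.castAddHom ℚ).range.comap f.toAddMonoidHom := by
    rw [AddSubgroup.closure_le]
    rintro _ ⟨j, rfl⟩
    obtain ⟨n, hn⟩ := hf j
    exact ⟨n, hn.symm⟩
  obtain ⟨n, hn⟩ := hle hy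
  exact ⟨n, hn.symm⟩

section ReflectionInvariant

variable {R V : Type*} [CommRing R] [AddCommGroup V] [Module R V]

theorem two_mul_apply_eq_of_reflection_invariant {f : Module.Dual R V} {x : V} (h : f x = 2)
    (b : V →ₗ[R] V →ₗ[R] R)
    (hb : ∀ y z, b (Module.reflection h y) (Module.reflection h z) = b y z) (z : V) :
    2 * b z x = f z * b x x := by
  have := hb z x
  simp only [Module.reflection_apply, h, map_sub, map_smul,
    LinearMap.sub_apply, LinearMap.smul_apply, smul_eq_mul] at this
  linear_combination -this

variable {ι : Type*} {f : ι → Module.Dual R V} {v : ι → V} (hfv : ∀ i, f i (v i) = 2)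
  {b b' : V →ₗ[R] V →ₗ[R] R}

theorem eq_of_reflection_invariant_of_apply_self_eq [IsDomain R] [NeZero (2 : R)]
    (hb : ∀ i y z, b (Module.reflection (hfv i) y) (Module.reflection (hfv i) z) = b y z)
    (hb' : ∀ i y z, b' (Module.reflection (hfv i) y) (Module.reflection (hfv i) z) = b' y z)
    (hspan : Submodule.span R (Set.range v) = ⊤) (hdiag : ∀ i, b (v i) (v i) = b' (v i) (v i)) :
    b = b' := by
  refine LinearMap.ext fun z => LinearMap.ext_on hspan ?_
  rintro _ ⟨i, rfl⟩
  refine mul_left_cancel₀ (NeZero.ne (2 : R)) ?_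
  rw [two_mul_apply_eq_of_reflection_invariant (hfv i) b (hb i),
    two_mul_apply_eq_of_reflection_invariant (hfv i) b' (hb' i), hdiag]

theorem apply_self_eq_of_reflection_invariant [IsDomain R]
    (hb : ∀ i y z, b (Module.reflection (hfv i) y) (Module.reflection (hfv i) z) = b y z)
    (hb' : ∀ i y z, b' (Module.reflection (hfv i) y) (Module.reflection (hfv i) z) = b' y z)
    {δ : V} (hδ : ∀ i, f i δ ≠ 0)
    (hagree : ∀ i, b δ (v i) = b' δ (v i)) (i : ι) : b (v i) (v i) = b' (v i) (v i) := by
  refine mul_left_cancel₀ (hδ i) ?_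
  rw [← two_mul_apply_eq_of_reflection_invariant (hfv i) b (hb i),
    ← two_mul_apply_eq_of_reflection_invariant (hfv i) b' (hb' i), hagree]

end ReflectionInvariant

theorem ns_contraction_injective_for_some_lift_general
    (V : Type*) [AddCommGroup V] [Module ℚ V]
    (ι : Type*) [Fintype ι]
    (root : ι → (V →ₗ[ℚ] ℚ)) (coroot : ι → V)
    (hpair : ∀ i, root i (coroot i) = 2)
    (hcrys : ∀ i j, ∃ n : ℤ, root i (coroot j) = (n : ℚ))
    (hspan : Submodule.span ℚ (Set.range coroot) = ⊤)
    (W : Subgroup (V ≃ₗ[ℚ] V))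
    (hW : W = Subgroup.closure (Set.range fun i => Module.reflection (hpair i)))
    (Q : AddSubgroup V)
    (hQ : Q = AddSubgroup.closure (Set.range coroot)) :
    ∀ δ₀ : V, (∀ i, ∃ n : ℤ, root i δ₀ = (n : ℚ)) →
      ∃ δ : V, (∀ i, ∃ n : ℤ, root i δ = (n : ℚ)) ∧ δ - δ₀ ∈ Q ∧
        ∀ b b' : V →ₗ[ℚ] V →ₗ[ℚ] ℚ, IsNSForm W Q b → IsNSForm W Q b' →
          (∀ l ∈ Q, b δ l = b' δ l) → b = b' := by
  intro δ₀ hδ₀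
  subst hQ
  obtain ⟨q, hq, hreg⟩ := exists_mem_closure_forall_apply_add_ne_zero root coroot
    (fun i => hpair i ▸ two_ne_zero) δ₀ Finset.univ
  refine ⟨δ₀ + q, fun i => ?_, by simpa using hq, fun b b' hb hb' hagree => ?_⟩
  · obtain ⟨m, hm⟩ := hδ₀ i
    obtain ⟨n, hn⟩ := exists_int_apply_eq_of_mem_closure (root i) coroot (hcrys i) hq
    exact ⟨m + n, by simp [hm, hn]⟩
  · have hrefl : ∀ i, Module.reflection (hpair i) ∈ W := fun i =>
      hW ▸ Subgroup.subset_closure ⟨i, rfl⟩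
    have hbW := fun i => hb.2.1 _ (hrefl i)
    have hb'W := fun i => hb'.2.1 _ (hrefl i)
    exact eq_of_reflection_invariant_of_apply_self_eq hpair hbW hb'W hspan
      (apply_self_eq_of_reflection_invariant hpair hbW hb'W (fun i => hreg i (Finset.mem_univ i))
        fun i => hagree _ (AddSubgroup.subset_closure ⟨i, rfl⟩))

/-- Every coset of `Q` (the coroot lattice) in `P∨` (the coweight lattice)
admits a representative `δ ∈ P∨` such that the homomorphism
`NS(R) → Hom(Q, ℤ)`, `b ↦ (λ ↦ b(δ, λ))`, is injective. -/
theorem ns_contraction_injective_for_some_lift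
    (V : Type*) [AddCommGroup V] [Module ℚ V] [FiniteDimensional ℚ V]
    (ι : Type*) [Fintype ι]
    (root : ι → (V →ₗ[ℚ] ℚ)) (coroot : ι → V)
    (hpair : ∀ i, root i (coroot i) = 2)
    (hcrys : ∀ i j, ∃ n : ℤ, root i (coroot j) = (n : ℚ))
    (hreduced : ∀ i j, (∃ c : ℚ, root j = c • root i) →
      root j = root i ∨ root j = -root i)
    (hrefl_co : ∀ i j, ∃ k, Module.reflection (hpair i) (coroot j) = coroot k)
    (hrefl_root : ∀ i j, ∃ k, ∀ x : V,
      root j (Module.reflection (hpair i) x) = root k x)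
    (hspan : Submodule.span ℚ (Set.range coroot) = ⊤)
    (W : Subgroup (V ≃ₗ[ℚ] V))
    (hW : W = Subgroup.closure (Set.range fun i => Module.reflection (hpair i)))
    (Q : AddSubgroup V)
    (hQ : Q = AddSubgroup.closure (Set.range coroot)) :
    ∀ δ₀ : V, (∀ i, ∃ n : ℤ, root i δ₀ = (n : ℚ)) →
      ∃ δ : V, (∀ i, ∃ n : ℤ, root i δ = (n : ℚ)) ∧ δ - δ₀ ∈ Q ∧
        ∀ b b' : V →ₗ[ℚ] V →ₗ[ℚ] ℚ, IsNSForm W Q b → IsNSForm W Q b' →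
          (∀ l ∈ Q, b δ l = b' δ l) → b = b' :=
  ns_contraction_injective_for_some_lift_general V ι root coroot hpair hcrys hspan W hW Q hQ
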